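/- arXiv:1912.05819 — 4 statements merged into one kernel-verified Lean document; each statement's English description precedes it below -/
import Mathlib

section
/- Let (A₀, A₁, A₂) be a valid 3-partition of E(G) and A ∈ {A₁, A₂}. If a, b, c, d is an alternating A-path (i.e., a ≠ d, ab, cd ∈ A ∪ A₀, and bc ∉ E(G)), then ad ∈ E(G). -/
open SimpleGraph

def ValidPartition {V : Type*} (G : SimpleGraph V) (A0 A1 A2 : Set (Sym2 V)) : Prop :=
  A0 ∪ A1 ∪ A2 = G.edgeSet ∧ Disjoint A0 A1 ∧ Disjoint A0 A2 ∧ Disjoint A1 A2 ∧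
  ∀ a b c d : V, G.Adj a b → G.Adj c d → ¬G.Adj a d → ¬G.Adj b c →
    ((s(a, b) ∈ A1 ∧ s(c, d) ∈ A2) ∨ (s(a, b) ∈ A2 ∧ s(c, d) ∈ A1))

theorem alternating_path_adj {V : Type*} [Fintype V] (G : SimpleGraph V)
    (A0 A1 A2 A : Set (Sym2 V)) (hVP : ValidPartition G A0 A1 A2)
    (hA : A = A1 ∨ A = A2) (a b c d : V) (had : a ≠ d)
    (hab : s(a, b) ∈ A ∪ A0) (hcd : s(c, d) ∈ A ∪ A0) (hbc : ¬G.Adj b c) :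
    G.Adj a d := by
  obtain ⟨hunion, h01, h02, h12, hcyc⟩ := hVP
  have hsub : A ∪ A0 ⊆ G.edgeSet := by
    rw [← hunion]
    rcases hA with rfl | rfl <;> intro e he <;> rcases he with h | h <;>
      simp [Set.mem_union, h]
  have habG : G.Adj a b := (SimpleGraph.mem_edgeSet G).1 (hsub hab)
  have hcdG : G.Adj c d := (SimpleGraph.mem_edgeSet G).1 (hsub hcd)
  by_contra hnad
  have := hcyc a b c d habG hcdG hnad hbc
  rcases hA with rfl | rfl
  · rcases this with ⟨h1, h2⟩ | ⟨h1, h2⟩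
    · rcases hcd with h | h
      · exact h12.ne_of_mem h h2 rfl
      · exact h02.ne_of_mem h h2 rfl
    · rcases hab with h | h
      · exact h12.ne_of_mem h h1 rfl
      · exact h02.ne_of_mem h h1 rfl
  · rcases this with ⟨h1, h2⟩ | ⟨h1, h2⟩
    · rcases hab with h | h
      · exact h12.ne_of_mem h1 h rfl
      · exact h01.ne_of_mem h h1 rfl
    · rcases hcd with h | h
      · exact h12.ne_of_mem h2 h rfl
      · exact h01.ne_of_mem h h2 rfl
end

section
/- Let (A₀,A₁,A₂) be a valid 3-partition of E(G) with no strict switching paths. Then there do not exist vertices a₁,a₂,b₁,b₂,e₁,e₂,c,d such that (a₁,b₁,c,d,e₁) is an A₁-pentagon and (a₂,b₂,c,d,e₂) is an A₂-pentagon. -/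
open SimpleGraph

/-- `(a,b,c,d,e)` is an `A`-pentagon (with `Abar` the other color class and `A0` the
uncolored edges): `ac, ad, be ∉ E(G)`, `ab, ae ∈ A`, `bc, bd, ec, ed ∈ Abar`, `cd ∈ A ∪ A0`. -/
def Pentagon {V : Type*} (G : SimpleGraph V) (A0 A Abar : Set (Sym2 V)) (a b c d e : V) : Prop :=
  ¬G.Adj a c ∧ ¬G.Adj a d ∧ ¬G.Adj b e ∧
  s(a, b) ∈ A ∧ s(a, e) ∈ A ∧
  s(b, c) ∈ Abar ∧ s(b, d) ∈ Abar ∧ s(e, c) ∈ Abar ∧ s(e, d) ∈ Abar ∧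
  s(c, d) ∈ A ∪ A0

/-- `(x,y,z,w)` is a strict `A`-switching path: `xw ∉ E(G)`, `xy, zw ∈ A`, `yz ∈ Abar`. -/
def StrictSwitchingPath {V : Type*} (G : SimpleGraph V) (A Abar : Set (Sym2 V)) (x y z w : V) : Prop :=
  ¬G.Adj x w ∧ s(x, y) ∈ A ∧ s(z, w) ∈ A ∧ s(y, z) ∈ Abar

theorem no_double_pentagon {V : Type*} [Fintype V] (G : SimpleGraph V)
    (A0 A1 A2 : Set (Sym2 V)) (hVP : ValidPartition G A0 A1 A2)
    (hnsp1 : ∀ x y z w : V, ¬StrictSwitchingPath G A1 A2 x y z w)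
    (hnsp2 : ∀ x y z w : V, ¬StrictSwitchingPath G A2 A1 x y z w) :
    ¬∃ a1 a2 b1 b2 e1 e2 c d : V,
      Pentagon G A0 A1 A2 a1 b1 c d e1 ∧ Pentagon G A0 A2 A1 a2 b2 c d e2 := by
  rintro ⟨a1, a2, b1, b2, e1, e2, c, d,
    ⟨h1ac, h1ad, h1be, h1ab, h1ae, h1bc, h1bd, h1ec, h1ed, h1cd⟩,
    ⟨h2ac, h2ad, h2be, h2ab, h2ae, h2bc, h2bd, h2ec, h2ed, h2cd⟩⟩
  obtain ⟨hU, hD01, hD02, hD12, hval⟩ := hVP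
  have hsub1 : A1 ⊆ G.edgeSet := by
    rw [← hU]; intro x hx; exact Or.inl (Or.inr hx)
  have hsub2 : A2 ⊆ G.edgeSet := by
    rw [← hU]; intro x hx; exact Or.inr hx
  have adj1 : ∀ {x y : V}, s(x, y) ∈ A1 → G.Adj x y :=
    fun h => (G.mem_edgeSet).1 (hsub1 h)
  have adj2 : ∀ {x y : V}, s(x, y) ∈ A2 → G.Adj x y :=
    fun h => (G.mem_edgeSet).1 (hsub2 h)
  have nd12 : ∀ {x : Sym2 V}, x ∈ A1 → x ∈ A2 → False :=
    fun h1 h2 => Set.disjoint_left.1 hD12 h1 h2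
  -- a1 adjacent to e2 (else strict A1-path (a1,b1,c,e2))
  have hAa1e2 : G.Adj a1 e2 := by
    by_contra h
    exact hnsp1 a1 b1 c e2 ⟨h, h1ab, by rwa [Sym2.eq_swap], h1bc⟩
  -- a2 adjacent to e1 (else strict A2-path (a2,b2,c,e1))
  have hAa2e1 : G.Adj a2 e1 := by
    by_contra h
    exact hnsp2 a2 b2 c e1 ⟨h, h2ab, by rwa [Sym2.eq_swap], h2bc⟩
  -- color of a1e2 is A2
  have ha1e2 : s(a1, e2) ∈ A2 := by
    rcases hval a1 e2 b2 c hAa1e2 (adj1 h2bc) h1ac (fun h => h2be h.symm) with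
      ⟨_, hx⟩ | ⟨hx, _⟩
    · exact absurd hx (fun hx => nd12 h2bc hx)
    · exact hx
  -- color of a2e1 is A1
  have ha2e1 : s(a2, e1) ∈ A1 := by
    rcases hval a2 e1 b1 c hAa2e1 (adj2 h1bc) h2ac (fun h => h1be h.symm) with
      ⟨hx, _⟩ | ⟨_, hx⟩
    · exact hx
    · exact (nd12 hx h1bc).elim
  -- b1 adjacent to b2
  have hAb1b2 : G.Adj b1 b2 := by
    by_contra h
    rcases hval a1 b1 b2 c (adj1 h1ab) (adj1 h2bc) h1ac h with ⟨_, hx⟩ | ⟨hx, _⟩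
    · exact nd12 h2bc hx
    · exact nd12 h1ab hx
  -- e1 adjacent to e2
  have hAe1e2 : G.Adj e1 e2 := by
    by_contra h
    rcases hval a1 e1 e2 c (adj1 h1ae) (adj1 h2ec) h1ac h with ⟨_, hx⟩ | ⟨hx, _⟩
    · exact nd12 h2ec hx
    · exact nd12 h1ae hx
  -- the edge b1b2 must be colored A1 or A2, both impossible
  rcases hval b1 b2 e2 e1 hAb1b2 hAe1e2.symm h1be h2be with ⟨hx, _⟩ | ⟨hx, _⟩
  · exact hnsp1 b1 b2 a2 e1 ⟨h1be, hx, ha2e1, by rwa [Sym2.eq_swap]⟩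
  · exact hnsp2 b2 b1 a1 e2 ⟨h2be, by rwa [Sym2.eq_swap], ha1e2,
      by rw [Sym2.eq_swap]; exact h1ab⟩
end

section
/- Let (F₀,F₁,F₂) be a valid 3-partition of E(G), let (a,b,c,d,e) be a strict F-pentagon (F ∈ {F₁,F₂}), and let uv ∈ E(G) with cv, du ∉ E(G) and u ≠ a. Then (d, b, u, a, e) is a strict F̄-pentagon, where F̄ is the other class. -/
open SimpleGraph

/-- `(a,b,c,d,e)` is a strict `A`-pentagon (with `Abar` the other color class):
`ac, ad, be ∉ E(G)`, `ab, ae ∈ A`, `bc, bd, ec, ed ∈ Abar`, `cd ∈ A`. -/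
def StrictPentagon {V : Type*} (G : SimpleGraph V) (A Abar : Set (Sym2 V)) (a b c d e : V) : Prop :=
  ¬G.Adj a c ∧ ¬G.Adj a d ∧ ¬G.Adj b e ∧
  s(a, b) ∈ A ∧ s(a, e) ∈ A ∧
  s(b, c) ∈ Abar ∧ s(b, d) ∈ Abar ∧ s(e, c) ∈ Abar ∧ s(e, d) ∈ Abar ∧
  s(c, d) ∈ A

theorem pentagon_neighbor {V : Type*} [Fintype V] (G : SimpleGraph V)
    (F0 F1 F2 F Fbar : Set (Sym2 V)) (hVP : ValidPartition G F0 F1 F2)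
    (hF : (F = F1 ∧ Fbar = F2) ∨ (F = F2 ∧ Fbar = F1))
    (a b c d e u v : V) (hpent : StrictPentagon G F Fbar a b c d e)
    (huv : G.Adj u v) (hcv : ¬G.Adj c v) (hdu : ¬G.Adj d u) (hua : u ≠ a) :
    StrictPentagon G Fbar F d b u a e := by
  obtain ⟨hunion, h01, h02, h12, hprop⟩ := hVP
  -- F and Fbar are disjoint subsets of the edge set
  have hdisj : Disjoint F Fbar := by
    rcases hF with ⟨rfl, rfl⟩ | ⟨rfl, rfl⟩
    · exact h12
    · exact h12.symm
  have adjF : ∀ x y : V, s(x, y) ∈ F → G.Adj x y := by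
    intro x y hx
    have : s(x, y) ∈ G.edgeSet := by
      rw [← hunion]
      rcases hF with ⟨rfl, _⟩ | ⟨rfl, _⟩
      · exact Or.inl (Or.inr hx)
      · exact Or.inr hx
    exact this
  have adjFbar : ∀ x y : V, s(x, y) ∈ Fbar → G.Adj x y := by
    intro x y hx
    have : s(x, y) ∈ G.edgeSet := by
      rw [← hunion]
      rcases hF with ⟨_, rfl⟩ | ⟨_, rfl⟩
      · exact Or.inr hx
      · exact Or.inl (Or.inr hx)
    exact this
  -- key transfer lemmas
  have keyF : ∀ x y z w : V, G.Adj x y → G.Adj z w → ¬G.Adj x w → ¬G.Adj y z →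
      s(x, y) ∈ F → s(z, w) ∈ Fbar := by
    intro x y z w hxy hzw hxw hyz hmem
    rcases hprop x y z w hxy hzw hxw hyz with ⟨h1, h2⟩ | ⟨h1, h2⟩ <;>
      rcases hF with ⟨rfl, rfl⟩ | ⟨rfl, rfl⟩
    · exact h2
    · exact absurd hmem (Set.disjoint_left.mp h12 h1)
    · exact absurd h1 (Set.disjoint_left.mp h12 hmem)
    · exact h2
  have keyFbar : ∀ x y z w : V, G.Adj x y → G.Adj z w → ¬G.Adj x w → ¬G.Adj y z →
      s(x, y) ∈ Fbar → s(z, w) ∈ F := by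
    intro x y z w hxy hzw hxw hyz hmem
    rcases hprop x y z w hxy hzw hxw hyz with ⟨h1, h2⟩ | ⟨h1, h2⟩ <;>
      rcases hF with ⟨rfl, rfl⟩ | ⟨rfl, rfl⟩
    · exact absurd hmem (Set.disjoint_left.mp h12 h1)
    · exact h2
    · exact h2
    · exact absurd h1 (Set.disjoint_left.mp h12 hmem)
  have notboth : ∀ s : Sym2 V, s ∈ F → s ∈ Fbar → False := by
    intro s hs1 hs2
    exact absurd hs2 (Set.disjoint_left.mp hdisj hs1)
  obtain ⟨hac, had, hbe, hab, hae, hbc, hbd, hec, hed, hcd⟩ := hpent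
  have hAab : G.Adj a b := adjF a b hab
  have hAae : G.Adj a e := adjF a e hae
  have hAbc : G.Adj b c := adjFbar b c hbc
  have hAbd : G.Adj b d := adjFbar b d hbd
  have hAec : G.Adj e c := adjFbar e c hec
  have hAed : G.Adj e d := adjFbar e d hed
  have hAcd : G.Adj c d := adjF c d hcd
  have hcv' : ¬G.Adj v c := fun h => hcv h.symm
  have hdu' : ¬G.Adj u d := fun h => hdu h.symm
  -- uv ∈ Fbar : 4-cycle c-d, u-v
  have huvFbar : s(u, v) ∈ Fbar := keyF c d u v hAcd huv hcv hdu hcd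
  -- Adj b u : else cycle (b,c)-(v,u) forces opposite colors, but both in Fbar
  have hAbu : G.Adj b u := by
    by_contra hbu
    exact notboth _ (keyFbar b c v u hAbc huv.symm hbu hcv hbc)
      (Sym2.eq_swap ▸ huvFbar)
  -- Adj e u
  have hAeu : G.Adj e u := by
    by_contra heu
    exact notboth _ (keyFbar e c v u hAec huv.symm heu hcv hec)
      (Sym2.eq_swap ▸ huvFbar)
  have hac' : ¬G.Adj c a := fun h => hac h.symm
  -- s(u,b) ∈ F : cycle (e,d)-(u,b)
  have hubF : s(u, b) ∈ F := keyFbar e d u b hAed hAbu.symm (fun h => hbe h.symm) hdu hed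
  -- s(u,e) ∈ F : cycle (b,d)-(u,e)
  have hueF : s(u, e) ∈ F := keyFbar b d u e hAbd hAeu.symm hbe hdu hbd
  -- Adj u a : else cycle (b,u)-(a,e) forces opposite colors, both in F
  have hAua : G.Adj u a := by
    by_contra hau
    exact notboth _ hae (keyF b u a e hAbu hAae hbe (fun h => hau h)
      (Sym2.eq_swap ▸ hubF))
  -- s(u,a) ∈ Fbar : cycle (c,d)-(u,a)
  have huaFbar : s(u, a) ∈ Fbar := keyF c d u a hAcd hAua hac' hdu hcd
  refine ⟨hdu, fun h => had h.symm, hbe, Sym2.eq_swap ▸ hbd,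
    Sym2.eq_swap ▸ hed, Sym2.eq_swap ▸ hubF, Sym2.eq_swap ▸ hab,
    Sym2.eq_swap ▸ hueF, Sym2.eq_swap ▸ hae, huaFbar⟩
end

section
/- A graph is a split graph if and only if it contains no induced subgraph isomorphic to 2K₂, C₄, or C₅. -/
open SimpleGraph

/-- `G` is a split graph: its vertex set partitions into a clique `K` and an
independent set (the complement of `K`). -/
def IsSplitGraph {V : Type*} (G : SimpleGraph V) : Prop :=
  ∃ K : Set V, (∀ x ∈ K, ∀ y ∈ K, x ≠ y → G.Adj x y) ∧
    (∀ x ∉ K, ∀ y ∉ K, ¬G.Adj x y)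

section Aux

variable {V : Type*} [Fintype V] [DecidableEq V] (G : SimpleGraph V) [DecidableRel G.Adj]

/-- Number of (ordered) adjacent pairs of vertices outside `K`. -/
def badCount (K : Finset V) : ℕ :=
  ((Kᶜ ×ˢ Kᶜ).filter fun p => G.Adj p.1 p.2).card

lemma key_lemma
    (h2 : ∀ a b c d : V, a ≠ b → a ≠ c → a ≠ d → b ≠ c → b ≠ d → c ≠ d →
        ¬(G.Adj a b ∧ G.Adj c d ∧ ¬G.Adj a c ∧ ¬G.Adj a d ∧ ¬G.Adj b c ∧ ¬G.Adj b d))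
    (h4 : ∀ a b c d : V, a ≠ b → a ≠ c → a ≠ d → b ≠ c → b ≠ d → c ≠ d →
        ¬(G.Adj a b ∧ G.Adj b c ∧ G.Adj c d ∧ G.Adj d a ∧ ¬G.Adj a c ∧ ¬G.Adj b d))
    (h5 : ∀ a b c d e : V, a ≠ b → a ≠ c → a ≠ d → a ≠ e → b ≠ c → b ≠ d → b ≠ e →
        c ≠ d → c ≠ e → d ≠ e →
        ¬(G.Adj a b ∧ G.Adj b c ∧ G.Adj c d ∧ G.Adj d e ∧ G.Adj e a ∧
          ¬G.Adj a c ∧ ¬G.Adj a d ∧ ¬G.Adj b d ∧ ¬G.Adj b e ∧ ¬G.Adj c e))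
    (K : Finset V) (hK : ∀ u ∈ K, ∀ v ∈ K, u ≠ v → G.Adj u v)
    (hmax : ∀ K' : Finset V, (∀ u ∈ K', ∀ v ∈ K', u ≠ v → G.Adj u v) → K'.card ≤ K.card)
    (hmin : ∀ K' : Finset V, (∀ u ∈ K', ∀ v ∈ K', u ≠ v → G.Adj u v) → K'.card = K.card →
      badCount G K ≤ badCount G K')
    (x y : V) (hx : x ∉ K) (hy : y ∉ K) (hxy : G.Adj x y)
    (hBA : ∀ b ∈ K, ¬G.Adj b y → ¬G.Adj b x) : False := by
  have hxyne : x ≠ y := hxy.ne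
  -- there is a vertex of K not adjacent to y
  have hzex : ∃ z ∈ K, ¬ G.Adj z y := by
    by_contra h
    push_neg at h
    have hcl : ∀ u ∈ insert y K, ∀ v ∈ insert y K, u ≠ v → G.Adj u v := by
      intro u hu v hv huv
      rcases Finset.mem_insert.mp hu with g1 | g1 <;>
        rcases Finset.mem_insert.mp hv with g2 | g2
      · exact absurd (g1.trans g2.symm) huv
      · subst g1; exact (h v g2).symm
      · subst g2; exact h u g1
      · exact hK u g1 v g2 huv
    have := hmax _ hcl
    rw [Finset.card_insert_of_notMem hy] at this
    omega
  obtain ⟨z, hzK, hzy⟩ := hzex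
  have hzx : ¬ G.Adj z x := hBA z hzK hzy
  have hzxne : z ≠ x := fun h => hx (h ▸ hzK)
  have hzyne : z ≠ y := fun h => hy (h ▸ hzK)
  -- every other vertex of K is adjacent to y
  have huniq : ∀ k ∈ K, k ≠ z → G.Adj k y := by
    intro k hk hkz
    by_contra hky
    have hkx := hBA k hk hky
    exact h2 z k x y hkz.symm hzxne hzyne (fun h => hx (h ▸ hk)) (fun h => hy (h ▸ hk)) hxyne
      ⟨hK z hzK k hk hkz.symm, hxy, hzx, hzy, hkx, hky⟩
  have hKpos : 1 ≤ K.card := Finset.card_pos.mpr ⟨z, hzK⟩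
  by_cases hA : ∀ k ∈ K, k ≠ z → G.Adj k x
  · -- then (K \ {z}) ∪ {x, y} is a bigger clique
    have hxE : x ∉ insert y (K.erase z) := by
      simp only [Finset.mem_insert, Finset.mem_erase]
      push_neg
      exact ⟨hxyne, fun _ => hx⟩
    have hyE : y ∉ K.erase z := fun h => hy (Finset.mem_of_mem_erase h)
    have hcl : ∀ u ∈ insert x (insert y (K.erase z)), ∀ v ∈ insert x (insert y (K.erase z)),
        u ≠ v → G.Adj u v := by
      have hxk : ∀ k ∈ K.erase z, G.Adj x k := fun k hk =>
        (hA k (Finset.mem_of_mem_erase hk) (Finset.ne_of_mem_erase hk)).symm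
      have hyk : ∀ k ∈ K.erase z, G.Adj y k := fun k hk =>
        (huniq k (Finset.mem_of_mem_erase hk) (Finset.ne_of_mem_erase hk)).symm
      intro u hu v hv huv
      simp only [Finset.mem_insert] at hu hv
      rcases hu with rfl | rfl | hu <;> rcases hv with rfl | rfl | hv
      · exact absurd rfl huv
      · exact hxy
      · exact hxk _ hv
      · exact hxy.symm
      · exact absurd rfl huv
      · exact hyk _ hv
      · exact (hxk _ hu).symm
      · exact (hyk _ hu).symm
      · exact hK _ (Finset.mem_of_mem_erase hu) _ (Finset.mem_of_mem_erase hv) huv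
    have := hmax _ hcl
    rw [Finset.card_insert_of_notMem hxE, Finset.card_insert_of_notMem hyE,
      Finset.card_erase_of_mem hzK] at this
    omega
  · push_neg at hA
    obtain ⟨a, haK, hazne, hax⟩ := hA
    have hay : G.Adj a y := huniq a haK hazne
    have haz : G.Adj a z := hK a haK z hzK hazne
    have haxne : a ≠ x := fun h => hx (h ▸ haK)
    have hayne : a ≠ y := fun h => hy (h ▸ haK)
    -- the swapped clique
    set K' : Finset V := insert y (K.erase z) with hK'def
    have hyE : y ∉ K.erase z := fun h => hy (Finset.mem_of_mem_erase h)
    have hcl' : ∀ u ∈ K', ∀ v ∈ K', u ≠ v → G.Adj u v := by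
      have hyk : ∀ k ∈ K.erase z, G.Adj y k := fun k hk =>
        (huniq k (Finset.mem_of_mem_erase hk) (Finset.ne_of_mem_erase hk)).symm
      intro u hu v hv huv
      simp only [hK'def, Finset.mem_insert] at hu hv
      rcases hu with rfl | hu <;> rcases hv with rfl | hv
      · exact absurd rfl huv
      · exact hyk _ hv
      · exact (hyk _ hu).symm
      · exact hK _ (Finset.mem_of_mem_erase hu) _ (Finset.mem_of_mem_erase hv) huv
    have hcard' : K'.card = K.card := by
      rw [hK'def, Finset.card_insert_of_notMem hyE, Finset.card_erase_of_mem hzK]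
      omega
    have hminle := hmin K' hcl' hcard'
    -- key claim: any neighbour of z outside K' is a neighbour of y
    have hw : ∀ w, w ∉ K' → G.Adj z w → G.Adj y w := by
      intro w hwK' hzw
      have hwyne : w ≠ y := by rintro rfl; exact hwK' (Finset.mem_insert_self _ _)
      have hwK : w ∉ K := by
        intro hwk
        exact hwK' (Finset.mem_insert_of_mem (Finset.mem_erase.mpr ⟨hzw.ne.symm, hwk⟩))
      have hwxne : w ≠ x := by rintro rfl; exact hzx hzw
      by_contra hyw
      have hwx : G.Adj w x := by
        by_contra hwx
        exact h2 z w x y hzw.ne hzxne hzyne hwxne hwyne hxyne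
          ⟨hzw, hxy, hzx, hzy, hwx, fun h => hyw h.symm⟩
      have hwane : w ≠ a := fun h => hwK (h ▸ haK)
      have hwzne : w ≠ z := hzw.ne.symm
      by_cases hwa : G.Adj w a
      · -- induced C4 on x w a y
        exact h4 x w a y hwxne.symm haxne.symm hxyne hwane hwyne hayne
          ⟨hwx.symm, hwa, hay, hxy.symm, fun h => hax h.symm, fun h => hyw h.symm⟩
      · -- induced C5 on w x y a z
        exact h5 w x y a z hwxne hwyne hwane hwzne hxyne haxne.symm hzxne.symm
          hayne.symm hzyne.symm hazne
          ⟨hwx, hxy, hay.symm, haz, hzw, fun h => hyw h.symm, hwa,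
            fun h => hax h.symm, fun h => hzx h.symm, fun h => hzy h.symm⟩
    -- counting: badCount K' < badCount K
    have hS' : ∀ u, u ∉ K' → u ≠ y ∧ (u = z ∨ u ∉ K) := by
      intro u hu
      constructor
      · rintro rfl; exact hu (Finset.mem_insert_self _ _)
      · by_cases h : u = z
        · exact Or.inl h
        · exact Or.inr fun hk => hu (Finset.mem_insert_of_mem (Finset.mem_erase.mpr ⟨h, hk⟩))
    set T : Finset (V × V) := (K'ᶜ ×ˢ K'ᶜ).filter fun p => G.Adj p.1 p.2 with hT
    set U : Finset (V × V) := (Kᶜ ×ˢ Kᶜ).filter fun p => G.Adj p.1 p.2 with hU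
    set F : V × V → V × V := fun p => (if p.1 = z then y else p.1, if p.2 = z then y else p.2)
      with hF
    have hmemT : ∀ p : V × V, p ∈ T ↔ (p.1 ∉ K' ∧ p.2 ∉ K') ∧ G.Adj p.1 p.2 := by
      intro p
      rw [hT, Finset.mem_filter, Finset.mem_product, Finset.mem_compl, Finset.mem_compl]
    have hmemU : ∀ p : V × V, p ∈ U ↔ (p.1 ∉ K ∧ p.2 ∉ K) ∧ G.Adj p.1 p.2 := by
      intro p
      rw [hU, Finset.mem_filter, Finset.mem_product, Finset.mem_compl, Finset.mem_compl]
    have hmaps : ∀ p ∈ T, F p ∈ U := by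
      rintro ⟨u, v⟩ hp
      obtain ⟨⟨hu, hv⟩, huv⟩ := (hmemT (u, v)).mp hp
      rw [hmemU]
      by_cases h1 : u = z
      · by_cases h2 : v = z
        · rw [h1, h2] at huv; exact absurd huv (G.irrefl)
        · have hvK : v ∉ K := ((hS' v hv).2).resolve_left h2
          have hyv : G.Adj y v := hw v hv (h1 ▸ huv)
          simp only [hF, if_pos h1, if_neg h2]
          exact ⟨⟨hy, hvK⟩, hyv⟩
      · have huK : u ∉ K := ((hS' u hu).2).resolve_left h1
        by_cases h2 : v = z
        · have hyu : G.Adj y u := hw u hu (h2 ▸ huv.symm)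
          simp only [hF, if_neg h1, if_pos h2]
          exact ⟨⟨huK, hy⟩, hyu.symm⟩
        · have hvK : v ∉ K := ((hS' v hv).2).resolve_left h2
          simp only [hF, if_neg h1, if_neg h2]
          exact ⟨⟨huK, hvK⟩, huv⟩
    have hg : ∀ u v : V, u ∉ K' → v ∉ K' →
        (if u = z then y else u) = (if v = z then y else v) → u = v := by
      intro u v hu hv h
      have hu' := (hS' u hu).1
      have hv' := (hS' v hv).1
      split_ifs at h with h1 h2 h2
      · rw [h1, h2]
      · exact absurd h.symm hv'
      · exact absurd h hu'
      · exact h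
    have hinj : Set.InjOn F ↑T := by
      rintro ⟨u1, v1⟩ hp ⟨u2, v2⟩ hq heq
      obtain ⟨⟨hu1, hv1⟩, _⟩ := (hmemT (u1, v1)).mp (Finset.mem_coe.mp hp)
      obtain ⟨⟨hu2, hv2⟩, _⟩ := (hmemT (u2, v2)).mp (Finset.mem_coe.mp hq)
      have e1 : (if u1 = z then y else u1) = (if u2 = z then y else u2) :=
        congrArg Prod.fst heq
      have e2 : (if v1 = z then y else v1) = (if v2 = z then y else v2) :=
        congrArg Prod.snd heq
      exact Prod.ext (hg u1 u2 hu1 hu2 e1) (hg v1 v2 hv1 hv2 e2)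
    have himage : T.image F ⊆ U := Finset.image_subset_iff.mpr hmaps
    have hxyU : (x, y) ∈ U := (hmemU (x, y)).mpr ⟨⟨hx, hy⟩, hxy⟩
    have hxynotim : (x, y) ∉ T.image F := by
      rw [Finset.mem_image]
      rintro ⟨⟨u, v⟩, hpT, heq⟩
      obtain ⟨⟨hu, hv⟩, huv⟩ := (hmemT (u, v)).mp hpT
      have e1 : (if u = z then y else u) = x := congrArg Prod.fst heq
      have e2 : (if v = z then y else v) = y := congrArg Prod.snd heq
      have hvz : v = z := by
        by_contra h
        rw [if_neg h] at e2
        exact (hS' v hv).1 e2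
      have huz : u = x := by
        by_cases h : u = z
        · rw [if_pos h] at e1; exact absurd e1.symm hxyne
        · rw [if_neg h] at e1; exact e1
      subst hvz; subst huz
      exact hzx huv.symm
    have hlt : T.card < U.card := by
      calc T.card = (T.image F).card := (Finset.card_image_of_injOn hinj).symm
        _ < U.card := Finset.card_lt_card
            ((Finset.ssubset_iff_of_subset himage).mpr ⟨(x, y), hxyU, hxynotim⟩)
    have : badCount G K' < badCount G K := hlt
    omega

lemma backward
    (h2 : ∀ a b c d : V, a ≠ b → a ≠ c → a ≠ d → b ≠ c → b ≠ d → c ≠ d →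
        ¬(G.Adj a b ∧ G.Adj c d ∧ ¬G.Adj a c ∧ ¬G.Adj a d ∧ ¬G.Adj b c ∧ ¬G.Adj b d))
    (h4 : ∀ a b c d : V, a ≠ b → a ≠ c → a ≠ d → b ≠ c → b ≠ d → c ≠ d →
        ¬(G.Adj a b ∧ G.Adj b c ∧ G.Adj c d ∧ G.Adj d a ∧ ¬G.Adj a c ∧ ¬G.Adj b d))
    (h5 : ∀ a b c d e : V, a ≠ b → a ≠ c → a ≠ d → a ≠ e → b ≠ c → b ≠ d → b ≠ e →
        c ≠ d → c ≠ e → d ≠ e →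
        ¬(G.Adj a b ∧ G.Adj b c ∧ G.Adj c d ∧ G.Adj d e ∧ G.Adj e a ∧
          ¬G.Adj a c ∧ ¬G.Adj a d ∧ ¬G.Adj b d ∧ ¬G.Adj b e ∧ ¬G.Adj c e)) :
    IsSplitGraph G := by
  classical
  set CS : Finset (Finset V) :=
    Finset.univ.filter (fun K : Finset V => ∀ u ∈ K, ∀ v ∈ K, u ≠ v → G.Adj u v) with hCS
  have hCSmem : ∀ K : Finset V, K ∈ CS ↔ ∀ u ∈ K, ∀ v ∈ K, u ≠ v → G.Adj u v := by
    intro K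
    rw [hCS, Finset.mem_filter]
    exact ⟨fun h => h.2, fun h => ⟨Finset.mem_univ _, h⟩⟩
  have hne : CS.Nonempty := ⟨∅, (hCSmem ∅).mpr (fun u hu => absurd hu (Finset.notMem_empty u))⟩
  obtain ⟨K₀, hK₀, hmax₀⟩ := CS.exists_max_image Finset.card hne
  set CS2 : Finset (Finset V) := CS.filter (fun K => K.card = K₀.card) with hCS2
  have hne2 : CS2.Nonempty := ⟨K₀, Finset.mem_filter.mpr ⟨hK₀, rfl⟩⟩
  obtain ⟨K, hKmem, hmin₀⟩ := CS2.exists_min_image (badCount G) hne2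
  obtain ⟨hKCS, hKcard⟩ := Finset.mem_filter.mp hKmem
  have hKcl : ∀ u ∈ K, ∀ v ∈ K, u ≠ v → G.Adj u v := (hCSmem K).mp hKCS
  have hmax : ∀ K' : Finset V, (∀ u ∈ K', ∀ v ∈ K', u ≠ v → G.Adj u v) → K'.card ≤ K.card := by
    intro K' h
    rw [hKcard]
    exact hmax₀ K' ((hCSmem K').mpr h)
  have hmin : ∀ K' : Finset V, (∀ u ∈ K', ∀ v ∈ K', u ≠ v → G.Adj u v) → K'.card = K.card →
      badCount G K ≤ badCount G K' := by
    intro K' h hc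
    exact hmin₀ K' (Finset.mem_filter.mpr ⟨(hCSmem K').mpr h, by rw [hc, hKcard]⟩)
  refine ⟨↑K, fun u hu v hv huv => hKcl u hu v hv huv, ?_⟩
  intro u hu v hv huv
  have hu' : u ∉ K := hu
  have hv' : v ∉ K := hv
  by_cases hc : ∀ b ∈ K, ¬G.Adj b v → ¬G.Adj b u
  · exact key_lemma G h2 h4 h5 K hKcl hmax hmin u v hu' hv' huv hc
  · push_neg at hc
    obtain ⟨b, hbK, hbv, hbu⟩ := hc
    have hbune : b ≠ u := fun h => hu' (h ▸ hbK)
    have hbvne : b ≠ v := fun h => hv' (h ▸ hbK)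
    have hc' : ∀ a ∈ K, ¬G.Adj a u → ¬G.Adj a v := by
      intro a haK hau
      by_contra hav
      have habne : a ≠ b := by rintro rfl; exact hau hbu
      -- induced C4 on u v a b
      exact h4 u v a b huv.ne (fun h => hu' (h ▸ haK)) (fun h => hu' (h ▸ hbK))
        (fun h => hv' (h ▸ haK)) (fun h => hv' (h ▸ hbK)) habne
        ⟨huv, hav.symm, hKcl a haK b hbK habne, hbu, fun h => hau h.symm,
          fun h => hbv h.symm⟩
    exact key_lemma G h2 h4 h5 K hKcl hmax hmin v u hv' hu' huv.symm hc'

end Aux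

theorem split_iff_forbidden {V : Type*} [Fintype V] (G : SimpleGraph V) :
    IsSplitGraph G ↔
      ((∀ a b c d : V, a ≠ b → a ≠ c → a ≠ d → b ≠ c → b ≠ d → c ≠ d →
          ¬(G.Adj a b ∧ G.Adj c d ∧ ¬G.Adj a c ∧ ¬G.Adj a d ∧ ¬G.Adj b c ∧ ¬G.Adj b d)) ∧
       (∀ a b c d : V, a ≠ b → a ≠ c → a ≠ d → b ≠ c → b ≠ d → c ≠ d →
          ¬(G.Adj a b ∧ G.Adj b c ∧ G.Adj c d ∧ G.Adj d a ∧ ¬G.Adj a c ∧ ¬G.Adj b d)) ∧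
       (∀ a b c d e : V, a ≠ b → a ≠ c → a ≠ d → a ≠ e → b ≠ c → b ≠ d → b ≠ e →
          c ≠ d → c ≠ e → d ≠ e →
          ¬(G.Adj a b ∧ G.Adj b c ∧ G.Adj c d ∧ G.Adj d e ∧ G.Adj e a ∧
            ¬G.Adj a c ∧ ¬G.Adj a d ∧ ¬G.Adj b d ∧ ¬G.Adj b e ∧ ¬G.Adj c e))) := by
  classical
  letI : DecidableEq V := Classical.decEq V
  letI : DecidableRel G.Adj := fun a b => Classical.dec _
  constructor
  · rintro ⟨K, hcl, hind⟩
    have edgeK : ∀ u v : V, G.Adj u v → u ∈ K ∨ v ∈ K := by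
      intro u v huv
      by_contra h
      push_neg at h
      exact hind u h.1 v h.2 huv
    have nonK : ∀ u v : V, u ≠ v → ¬G.Adj u v → ¬(u ∈ K ∧ v ∈ K) := by
      rintro u v hne hnadj ⟨h1, h2⟩
      exact hnadj (hcl u h1 v h2 hne)
    refine ⟨?_, ?_, ?_⟩
    · rintro a b c d hab hac had hbc hbd hcd ⟨e1, e2, n1, n2, n3, n4⟩
      have f1 := edgeK a b e1
      have f2 := edgeK c d e2
      have g1 := nonK a c hac n1
      have g2 := nonK a d had n2
      have g3 := nonK b c hbc n3
      have g4 := nonK b d hbd n4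
      tauto
    · rintro a b c d hab hac had hbc hbd hcd ⟨e1, e2, e3, e4, n1, n2⟩
      have f1 := edgeK a b e1
      have f2 := edgeK b c e2
      have f3 := edgeK c d e3
      have f4 := edgeK d a e4
      have g1 := nonK a c hac n1
      have g2 := nonK b d hbd n2
      tauto
    · rintro a b c d e hab hac had hae hbc hbd hbe hcd hce hde
        ⟨e1, e2, e3, e4, e5, n1, n2, n3, n4, n5⟩
      have f1 := edgeK a b e1
      have f2 := edgeK b c e2
      have f3 := edgeK c d e3
      have f4 := edgeK d e e4
      have f5 := edgeK e a e5
      have g1 := nonK a c hac n1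
      have g2 := nonK a d had n2
      have g3 := nonK b d hbd n3
      have g4 := nonK b e hbe n4
      rcases f1 with pa | pb
      · rcases f3 with pc | pd
        · exact g1 ⟨pa, pc⟩
        · exact g2 ⟨pa, pd⟩
      · rcases f4 with pd | pe
        · exact g3 ⟨pb, pd⟩
        · exact g4 ⟨pb, pe⟩
  · rintro ⟨h2, h4, h5⟩
    exact backward G h2 h4 h5
end
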